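/- arXiv:1707.01604 — 7 statements merged into one kernel-verified Lean document; each statement's English description precedes it below -/
import Mathlib

section
/- Let μ and ν be probability distributions on a finite set Ω and let X: Ω → [0,∞). Let p, q ∈ (1,∞) satisfy 1/p + 1/q = 1, and assume E_μ[X] ≥ E_ν[X] and E_μ[X^p] + E_ν[X^p] > 0. Then ‖μ − ν‖_TV ≥ (1/2)·(E_μ[X] − E_ν[X])^q / (E_μ[X^p] + E_ν[X^p])^{q−1}. -/
/-!
Since `X ≥ 0`, `E_μ[X] - E_ν[X] ≤ ∑ X |μ - ν|`. Hölder's inequality with the weights `|μ - ν|`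
bounds this by `(∑ |μ - ν|)^{1/q} (∑ X^p |μ - ν|)^{1/p}`, and `|μ - ν| ≤ μ + ν` bounds the
second factor by the sum of the `p`-th moments. Raising to the power `q` gives the claim.
-/

open Finset

namespace Finset

variable {ι : Type*} (s : Finset ι)

lemma sum_mul_sub_sum_mul_le_sum_abs_sub_mul {f a b : ι → ℝ} (hf : ∀ i ∈ s, 0 ≤ f i) :
    ∑ i ∈ s, f i * a i - ∑ i ∈ s, f i * b i ≤ ∑ i ∈ s, |a i - b i| * f i := by
  rw [← sum_sub_distrib]
  refine sum_le_sum fun i hi => ?_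
  rw [← mul_sub, mul_comm]
  exact mul_le_mul_of_nonneg_right (le_abs_self _) (hf i hi)

lemma sum_abs_sub_mul_le_sum_mul_add_sum_mul {f a b : ι → ℝ} (hf : ∀ i ∈ s, 0 ≤ f i)
    (ha : ∀ i ∈ s, 0 ≤ a i) (hb : ∀ i ∈ s, 0 ≤ b i) :
    ∑ i ∈ s, |a i - b i| * f i ≤ ∑ i ∈ s, f i * a i + ∑ i ∈ s, f i * b i := by
  rw [← sum_add_distrib]
  refine sum_le_sum fun i hi => ?_
  rw [← mul_add, mul_comm]
  refine mul_le_mul_of_nonneg_left ?_ (hf i hi)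
  calc |a i - b i| ≤ |a i| + |b i| := abs_sub _ _
    _ = a i + b i := by rw [abs_of_nonneg (ha i hi), abs_of_nonneg (hb i hi)]

lemma sum_mul_rpow_le_sum_mul_sum_mul_rpow {p q : ℝ} (hpq : p.HolderConjugate q)
    {w f : ι → ℝ} (hw : ∀ i, 0 ≤ w i) (hf : ∀ i, 0 ≤ f i) :
    (∑ i ∈ s, w i * f i) ^ q ≤ (∑ i ∈ s, w i) * (∑ i ∈ s, w i * f i ^ p) ^ (q - 1) := by
  have hW : 0 ≤ ∑ i ∈ s, w i := sum_nonneg fun i _ => hw i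
  have hWf : 0 ≤ ∑ i ∈ s, w i * f i ^ p :=
    sum_nonneg fun i _ => mul_nonneg (hw i) (Real.rpow_nonneg (hf i) _)
  calc (∑ i ∈ s, w i * f i) ^ q
      ≤ ((∑ i ∈ s, w i) ^ (1 - p⁻¹) * (∑ i ∈ s, w i * f i ^ p) ^ p⁻¹) ^ q :=
        Real.rpow_le_rpow (sum_nonneg fun i _ => mul_nonneg (hw i) (hf i))
          (Real.inner_le_weight_mul_Lp_of_nonneg s hpq.lt.le w f hw hf) hpq.symm.nonneg
    _ = (∑ i ∈ s, w i) * (∑ i ∈ s, w i * f i ^ p) ^ (q - 1) := by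
      rw [Real.mul_rpow (Real.rpow_nonneg hW _) (Real.rpow_nonneg hWf _), ← Real.rpow_mul hW,
        ← Real.rpow_mul hWf, hpq.one_sub_inv, inv_mul_cancel₀ hpq.symm.ne_zero, Real.rpow_one,
        inv_mul_eq_div, hpq.symm.div_conj_eq_sub_one]

end Finset

theorem tv_lower_bound_moments_general {Ω : Type*} [Fintype Ω] (μ ν : Ω → ℝ)
    (hμ0 : ∀ ω, 0 ≤ μ ω)
    (hν0 : ∀ ω, 0 ≤ ν ω)
    (X : Ω → ℝ) (hX : ∀ ω, 0 ≤ X ω)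
    (p q : ℝ) (hp : 1 < p) (hpq : 1 / p + 1 / q = 1)
    (hE : ∑ ω, X ω * ν ω ≤ ∑ ω, X ω * μ ω) :
    (1 / 2) * ((∑ ω, X ω * μ ω - ∑ ω, X ω * ν ω) ^ q /
        (∑ ω, X ω ^ p * μ ω + ∑ ω, X ω ^ p * ν ω) ^ (q - 1)) ≤
      (1 / 2) * ∑ ω, |μ ω - ν ω| := by
  have hconj : p.HolderConjugate q :=
    Real.holderConjugate_iff.mpr ⟨hp, by simpa only [one_div] using hpq⟩
  have hXp : ∀ ω, 0 ≤ X ω ^ p := fun ω => Real.rpow_nonneg (hX ω) p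
  have hmoments : 0 ≤ ∑ ω, X ω ^ p * μ ω + ∑ ω, X ω ^ p * ν ω :=
    add_nonneg (sum_nonneg fun ω _ => mul_nonneg (hXp ω) (hμ0 ω))
      (sum_nonneg fun ω _ => mul_nonneg (hXp ω) (hν0 ω))
  have key : (∑ ω, X ω * μ ω - ∑ ω, X ω * ν ω) ^ q ≤
      (∑ ω, |μ ω - ν ω|) * (∑ ω, X ω ^ p * μ ω + ∑ ω, X ω ^ p * ν ω) ^ (q - 1) :=
    calc (∑ ω, X ω * μ ω - ∑ ω, X ω * ν ω) ^ q
        ≤ (∑ ω, |μ ω - ν ω| * X ω) ^ q :=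
          Real.rpow_le_rpow (sub_nonneg.mpr hE)
            (sum_mul_sub_sum_mul_le_sum_abs_sub_mul _ fun ω _ => hX ω) hconj.symm.nonneg
      _ ≤ (∑ ω, |μ ω - ν ω|) * (∑ ω, |μ ω - ν ω| * X ω ^ p) ^ (q - 1) :=
          sum_mul_rpow_le_sum_mul_sum_mul_rpow _ hconj (fun ω => abs_nonneg _) hX
      _ ≤ (∑ ω, |μ ω - ν ω|) * (∑ ω, X ω ^ p * μ ω + ∑ ω, X ω ^ p * ν ω) ^ (q - 1) := by
          gcongr
          · exact sum_nonneg fun ω _ => mul_nonneg (abs_nonneg _) (hXp ω)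
          · exact hconj.symm.sub_one_pos.le
          · exact sum_abs_sub_mul_le_sum_mul_add_sum_mul _ (fun ω _ => hXp ω)
              (fun ω _ => hμ0 ω) (fun ω _ => hν0 ω)
  gcongr
  exact div_le_of_le_mul₀ (Real.rpow_nonneg hmoments _) (sum_nonneg fun ω _ => abs_nonneg _) key

/-- Lower bound lemma (Lemma `p2`): for probability distributions `μ, ν` on a finite set
`Ω`, a nonnegative test function `X`, and conjugate exponents `p, q ∈ (1, ∞)`,
`‖μ - ν‖_TV ≥ (1/2) (E_μ[X] - E_ν[X])^q / (E_μ[X^p] + E_ν[X^p])^{q-1}`. -/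
theorem tv_lower_bound_moments {Ω : Type*} [Fintype Ω] (μ ν : Ω → ℝ)
    (hμ0 : ∀ ω, 0 ≤ μ ω) (hμ1 : ∑ ω, μ ω = 1)
    (hν0 : ∀ ω, 0 ≤ ν ω) (hν1 : ∑ ω, ν ω = 1)
    (X : Ω → ℝ) (hX : ∀ ω, 0 ≤ X ω)
    (p q : ℝ) (hp : 1 < p) (hq : 1 < q) (hpq : 1 / p + 1 / q = 1)
    (hE : ∑ ω, X ω * ν ω ≤ ∑ ω, X ω * μ ω)
    (hP : 0 < ∑ ω, X ω ^ p * μ ω + ∑ ω, X ω ^ p * ν ω) :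
    (1 / 2) * ((∑ ω, X ω * μ ω - ∑ ω, X ω * ν ω) ^ q /
        (∑ ω, X ω ^ p * μ ω + ∑ ω, X ω ^ p * ν ω) ^ (q - 1)) ≤
      (1 / 2) * ∑ ω, |μ ω - ν ω| :=
  tv_lower_bound_moments_general μ ν hμ0 hν0 X hX p q hp hpq hE
end

section
/- Let β > 0 and let (α_i)_{i≥0} be nonnegative reals such that Σ_{i=0}^∞ α_i·x^i/i! converges for every x > 0. For each j ∈ ℕ set p_j = Σ_{i=j}^{∞} (−1)^{i−j}·C(i,j)·α_i·β^i/i! (this series converges absolutely). Then for every integer r ≥ 1, the series Σ_{j=0}^{∞} j^r·p_j converges absolutely and Σ_{j=0}^{∞} j^r·p_j = Σ_{i=1}^{r} S(r,i)·α_i·β^i. -/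
open Finset

def stirling2 : ℕ → ℕ → ℕ
  | 0, 0 => 1
  | 0, _ + 1 => 0
  | _ + 1, 0 => 0
  | n + 1, k + 1 => (k + 1) * stirling2 n (k + 1) + stirling2 n k

lemma stirling2_eq_zero_of_lt : ∀ {r i : ℕ}, r < i → stirling2 r i = 0 := by
  intro r
  induction r with
  | zero => intro i hi; cases i with
    | zero => omega
    | succ k => rfl
  | succ n ih =>
    intro i hi
    cases i with
    | zero => omega
    | succ k =>
      have h1 : stirling2 n (k+1) = 0 := ih (by omega)
      have h2 : stirling2 n k = 0 := ih (by omega)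
      show (k + 1) * stirling2 n (k + 1) + stirling2 n k = 0
      rw [h1, h2, mul_zero]

lemma stirling2_sum (r : ℕ) : ∀ m : ℕ,
    ∑ j ∈ range (m+1), (-1:ℝ)^(m+j) * (m.choose j) * (j:ℝ)^r
      = (m.factorial : ℝ) * stirling2 r m := by
  induction r with
  | zero =>
    intro m
    cases m with
    | zero => simp [stirling2]
    | succ k =>
      have h0 := Int.alternating_sum_range_choose_of_ne (n := k+1) (by omega)
      have h : (∑ j ∈ range (k+2), (-1:ℝ)^j * ((k+1).choose j)) = 0 := by
        exact_mod_cast congrArg (fun z : ℤ => (z:ℝ)) h0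
      have : ∑ j ∈ range (k+2), (-1:ℝ)^(k+1+j) * (((k+1).choose j : ℝ)) * (j:ℝ)^0
          = (-1:ℝ)^(k+1) * ∑ j ∈ range (k+2), (-1:ℝ)^j * ((k+1).choose j) := by
        rw [mul_sum]
        exact sum_congr rfl fun j _ => by rw [pow_add]; ring
      rw [this, h, mul_zero, stirling2_eq_zero_of_lt (by omega)]
      simp
  | succ r ih =>
    intro m
    cases m with
    | zero =>
      simp [stirling2, zero_pow (Nat.succ_ne_zero r)]
    | succ k =>
      -- step 1: LHS = (k+1) * V
      have e0 : ∑ j ∈ range (k+2), (-1:ℝ)^(k+1+j) * (((k+1).choose j : ℝ)) * (j:ℝ)^(r+1)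
          = ((k:ℝ)+1) * ∑ t ∈ range (k+1), (-1:ℝ)^(k+t) * ((k.choose t : ℝ)) * ((t:ℝ)+1)^r := by
        rw [Finset.sum_range_succ', mul_sum]
        have hz : (-1:ℝ)^(k+1+0) * (((k+1).choose 0 : ℝ)) * ((0:ℕ):ℝ)^(r+1) = 0 := by
          simp [zero_pow (Nat.succ_ne_zero r)]
        rw [hz, add_zero]
        refine sum_congr rfl fun t _ => ?_
        have hc : ((k:ℝ)+1) * (k.choose t : ℝ) = (((k+1).choose (t+1) : ℝ)) * ((t:ℝ)+1) := by
          exact_mod_cast congrArg (fun z : ℕ => (z:ℝ)) (Nat.add_one_mul_choose_eq k t)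
        push_cast
        linear_combination (-((-1:ℝ)^(k+t) * ((t:ℝ)+1)^r)) * hc
      -- step 2: V = T(r,k+1) + T(r,k)
      have e1 : ∑ j ∈ range (k+2), (-1:ℝ)^(k+1+j) * (((k+1).choose j : ℝ)) * (j:ℝ)^r
          = (∑ t ∈ range (k+1), (-1:ℝ)^(k+t) * ((k.choose t : ℝ) + (k.choose (t+1) : ℝ)) * ((t:ℝ)+1)^r)
            + (-1:ℝ)^(k+1) * (0:ℝ)^r := by
        rw [Finset.sum_range_succ']
        congr 1
        · refine sum_congr rfl fun t _ => ?_
          have hp : (((k+1).choose (t+1) : ℝ)) = (k.choose t : ℝ) + (k.choose (t+1) : ℝ) := by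
            exact_mod_cast congrArg (fun z : ℕ => (z:ℝ)) (Nat.choose_succ_succ' k t)
          rw [hp]
          push_cast
          ring
        · simp
      have e2 : ∑ j ∈ range (k+1), (-1:ℝ)^(k+j) * ((k.choose j : ℝ)) * (j:ℝ)^r
          = (∑ t ∈ range (k+1), (-1:ℝ)^(k+t+1) * ((k.choose (t+1) : ℝ)) * ((t:ℝ)+1)^r)
            + (-1:ℝ)^k * (0:ℝ)^r := by
        rw [Finset.sum_range_succ' (fun j => (-1:ℝ)^(k+j) * ((k.choose j : ℝ)) * (j:ℝ)^r) k]
        rw [Finset.sum_range_succ (fun t => (-1:ℝ)^(k+t+1) * ((k.choose (t+1) : ℝ)) * ((t:ℝ)+1)^r) k]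
        rw [Nat.choose_succ_self k]
        push_cast
        congr 1
        · rw [mul_zero, zero_mul, add_zero]
          refine sum_congr rfl fun t _ => ?_
          push_cast
          ring
        · simp
      have e3 : ∑ t ∈ range (k+1), (-1:ℝ)^(k+t) * ((k.choose t : ℝ)) * ((t:ℝ)+1)^r
          = (∑ j ∈ range (k+2), (-1:ℝ)^(k+1+j) * (((k+1).choose j : ℝ)) * (j:ℝ)^r)
            + (∑ j ∈ range (k+1), (-1:ℝ)^(k+j) * ((k.choose j : ℝ)) * (j:ℝ)^r) := by
        rw [e1, e2]
        rw [add_add_add_comm, ← sum_add_distrib]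
        have hz : (-1:ℝ)^(k+1) * (0:ℝ)^r + (-1:ℝ)^k * (0:ℝ)^r = 0 := by ring
        rw [hz, add_zero]
        refine sum_congr rfl fun t _ => ?_
        ring
      rw [e0, e3, ih (k+1), ih k]
      have hs : (stirling2 (r+1) (k+1) : ℝ) = ((k:ℝ)+1) * stirling2 r (k+1) + stirling2 r k := by
        show ((((k+1) * stirling2 r (k+1) + stirling2 r k : ℕ)) : ℝ) = _
        push_cast
        ring
      rw [hs]
      have hf : ((k+1).factorial : ℝ) = ((k:ℝ)+1) * (k.factorial : ℝ) := by
        rw [Nat.factorial_succ]; push_cast; ring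
      rw [hf]
      ring

/-- Mixed-Poisson-type moment identity: with `p_j = Σ_{i≥j} (-1)^{i-j} C(i,j) α_i β^i / i!`
(an absolutely convergent series), for every `r ≥ 1` the series `Σ_j j^r p_j` converges
absolutely with sum `Σ_{i=1}^r S(r,i) α_i β^i`. -/
theorem moments_of_inclusion_exclusion_pmf (β : ℝ) (hβ : 0 < β) (α : ℕ → ℝ)
    (hα : ∀ i, 0 ≤ α i)
    (hconv : ∀ x : ℝ, 0 < x → Summable (fun i : ℕ => α i * x ^ i / (Nat.factorial i))) :
    (∀ j : ℕ, Summable (fun i : ℕ =>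
      |if j ≤ i then (-1 : ℝ) ^ (i - j) * (i.choose j) * α i * β ^ i / (Nat.factorial i)
        else 0|)) ∧
    (∀ r : ℕ, 1 ≤ r →
      Summable (fun j : ℕ => |(j : ℝ) ^ r *
        ∑' i : ℕ, if j ≤ i then
          (-1 : ℝ) ^ (i - j) * (i.choose j) * α i * β ^ i / (Nat.factorial i) else 0|) ∧
      ∑' j : ℕ, ((j : ℝ) ^ r *
        ∑' i : ℕ, if j ≤ i then
          (-1 : ℝ) ^ (i - j) * (i.choose j) * α i * β ^ i / (Nat.factorial i) else 0) =
        ∑ i ∈ Finset.Icc 1 r, (stirling2 r i : ℝ) * α i * β ^ i) := by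
  classical
  set f : ℕ → ℕ → ℝ := fun j i =>
    if j ≤ i then (-1 : ℝ) ^ (i - j) * (i.choose j) * α i * β ^ i / (Nat.factorial i) else 0
    with hf_def
  have hfact_pos : ∀ i : ℕ, (0:ℝ) < (Nat.factorial i : ℝ) := fun i => by
    exact_mod_cast Nat.factorial_pos i
  have ha : ∀ i, 0 ≤ α i * β ^ i / (Nat.factorial i) := fun i =>
    div_nonneg (mul_nonneg (hα i) (pow_nonneg hβ.le i)) (hfact_pos i).le
  have habs : ∀ j i, |f j i| = if j ≤ i then (i.choose j : ℝ) * (α i * β ^ i / (Nat.factorial i)) else 0 := by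
    intro j i
    rw [hf_def]
    by_cases h : j ≤ i
    · simp only [if_pos h]
      rw [abs_div, abs_mul, abs_mul, abs_mul, abs_pow, abs_neg, abs_one, one_pow, one_mul,
        abs_of_nonneg (hα i), abs_of_nonneg (pow_nonneg hβ.le i),
        abs_of_nonneg (Nat.cast_nonneg _), abs_of_nonneg (Nat.cast_nonneg _)]
      ring
    · simp [h]
  -- the double family, |j^r * f j i| indexed by p = (i, j)
  have HH : ∀ r : ℕ, Summable (fun p : ℕ × ℕ => |(p.2:ℝ)^r * f p.2 p.1|) := by
    intro r
    have hnn : 0 ≤ fun p : ℕ × ℕ => |(p.2:ℝ)^r * f p.2 p.1| := fun p => abs_nonneg _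
    rw [summable_prod_of_nonneg hnn]
    constructor
    · intro i
      apply summable_of_ne_finset_zero (s := range (i+1))
      intro j hj
      simp only [mem_range, not_lt] at hj
      have : ¬ j ≤ i := by omega
      simp [hf_def, this]
    · -- Summable fun i => ∑' j, |j^r f j i|
      have key : ∀ i : ℕ, ∑' j : ℕ, |(j:ℝ)^r * f j i|
          ≤ (r.factorial : ℝ) * (α i * (6*β) ^ i / (Nat.factorial i)) := by
        intro i
        have hts : ∑' j : ℕ, |(j:ℝ)^r * f j i|
            = ∑ j ∈ range (i+1), |(j:ℝ)^r * f j i| := by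
          apply tsum_eq_sum
          intro j hj
          simp only [mem_range, not_lt] at hj
          have : ¬ j ≤ i := by omega
          simp [hf_def, this]
        rw [hts]
        have hir : ((i:ℝ))^r ≤ (r.factorial : ℝ) * 3 ^ i := by
          have h1 : ((i:ℝ))^r / (r.factorial : ℝ) ≤ Real.exp i :=
            Real.pow_div_factorial_le_exp (i:ℝ) (Nat.cast_nonneg i) r
          have h2 : Real.exp (i:ℝ) ≤ 3 ^ i := by
            have he : Real.exp (i:ℝ) = (Real.exp 1) ^ i := by
              rw [← Real.exp_nat_mul]; norm_num
            rw [he]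
            exact pow_le_pow_left₀ (Real.exp_pos 1).le
              (Real.exp_one_lt_d9.le.trans (by norm_num)) i
          have hfp : (0:ℝ) < (r.factorial : ℝ) := by exact_mod_cast Nat.factorial_pos r
          calc ((i:ℝ))^r = ((i:ℝ)^r / (r.factorial : ℝ)) * (r.factorial : ℝ) := by
                field_simp
            _ ≤ Real.exp i * (r.factorial : ℝ) := mul_le_mul_of_nonneg_right h1 hfp.le
            _ ≤ 3 ^ i * (r.factorial : ℝ) := mul_le_mul_of_nonneg_right h2 hfp.le
            _ = (r.factorial : ℝ) * 3 ^ i := by ring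
        calc ∑ j ∈ range (i+1), |(j:ℝ)^r * f j i|
            ≤ ∑ j ∈ range (i+1), ((i:ℝ)^r * (i.choose j : ℝ)) * (α i * β ^ i / (Nat.factorial i)) := by
              apply sum_le_sum
              intro j hj
              simp only [mem_range] at hj
              have hji : j ≤ i := by omega
              rw [abs_mul, abs_pow, abs_of_nonneg (Nat.cast_nonneg j : (0:ℝ) ≤ j), habs, if_pos hji]
              have hjr : ((j:ℝ))^r ≤ ((i:ℝ))^r := by
                apply pow_le_pow_left₀ (Nat.cast_nonneg j)
                exact_mod_cast hji
              have := mul_nonneg (Nat.cast_nonneg (i.choose j) : (0:ℝ) ≤ _) (ha i)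
              calc ((j:ℝ))^r * ((i.choose j : ℝ) * (α i * β ^ i / (Nat.factorial i)))
                  ≤ ((i:ℝ))^r * ((i.choose j : ℝ) * (α i * β ^ i / (Nat.factorial i))) := by
                    apply mul_le_mul_of_nonneg_right hjr this
                _ = ((i:ℝ)^r * (i.choose j : ℝ)) * (α i * β ^ i / (Nat.factorial i)) := by ring
          _ = (i:ℝ)^r * (2:ℝ)^i * (α i * β ^ i / (Nat.factorial i)) := by
              rw [← sum_mul, ← mul_sum]
              congr 2
              have := Nat.sum_range_choose i
              have : ((∑ j ∈ range (i+1), i.choose j : ℕ) : ℝ) = ((2^i : ℕ) : ℝ) := by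
                exact_mod_cast congrArg (fun z : ℕ => (z:ℝ)) this
              push_cast at this
              rw [← this]
          _ ≤ ((r.factorial : ℝ) * 3 ^ i) * (2:ℝ)^i * (α i * β ^ i / (Nat.factorial i)) := by
              apply mul_le_mul_of_nonneg_right (mul_le_mul_of_nonneg_right hir (by positivity)) (ha i)
          _ = (r.factorial : ℝ) * (α i * (6*β) ^ i / (Nat.factorial i)) := by
              rw [mul_pow, show (6:ℝ) = 2*3 by norm_num, mul_pow]
              field_simp
      refine Summable.of_nonneg_of_le (fun i => tsum_nonneg fun j => abs_nonneg _)
        (fun i => ?_) ((hconv (6*β) (by positivity)).mul_left (r.factorial : ℝ))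
      simpa using key i
  constructor
  · -- part 1
    intro j
    have h := (HH 0).prod_symm.prod_factor j
    simpa [pow_zero, one_mul] using h
  · intro r hr
    have HA : Summable (fun p : ℕ × ℕ => |(p.1:ℝ)^r * f p.1 p.2|) := (HH r).prod_symm
    have HF : Summable (fun p : ℕ × ℕ => (p.1:ℝ)^r * f p.1 p.2) := HA.of_abs
    have hfib1 : ∀ j : ℕ, Summable (fun i : ℕ => (j:ℝ)^r * f j i) :=
      fun j => HF.prod_factor j
    have hfib2 : ∀ i : ℕ, Summable (fun j : ℕ => (j:ℝ)^r * f j i) :=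
      fun i => HF.prod_symm.prod_factor i
    have hsum2 := (summable_prod_of_nonneg (fun p => abs_nonneg _)).mp HA
    constructor
    · -- summability of j ↦ |j^r * p_j|
      apply Summable.of_nonneg_of_le (fun j => abs_nonneg _) _ hsum2.2
      intro j
      have h1 : (j:ℝ)^r * (∑' i, f j i) = ∑' i, (j:ℝ)^r * f j i := (tsum_mul_left).symm
      rw [h1]
      have hsb : Summable fun i => ‖(j:ℝ)^r * f j i‖ := by
        simpa only [Real.norm_eq_abs] using hsum2.1 j
      have := norm_tsum_le_tsum_norm hsb
      simpa only [Real.norm_eq_abs] using this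
    · -- the value
      have step1 : ∑' j : ℕ, ((j : ℝ) ^ r * ∑' i : ℕ, f j i)
          = ∑' j : ℕ, ∑' i : ℕ, ((j:ℝ)^r * f j i) := by
        apply tsum_congr; intro j; exact tsum_mul_left.symm
      have step2 : ∑' j : ℕ, ∑' i : ℕ, ((j:ℝ)^r * f j i)
          = ∑' i : ℕ, ∑' j : ℕ, ((j:ℝ)^r * f j i) := by
        exact Summable.tsum_comm' ((HH r).of_abs) hfib2 hfib1
      have step3 : ∀ i : ℕ, ∑' j : ℕ, ((j:ℝ)^r * f j i)
          = (stirling2 r i : ℝ) * α i * β ^ i := by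
        intro i
        have hts : ∑' j : ℕ, ((j:ℝ)^r * f j i)
            = ∑ j ∈ range (i+1), ((j:ℝ)^r * f j i) := by
          apply tsum_eq_sum
          intro j hj
          simp only [mem_range, not_lt] at hj
          have : ¬ j ≤ i := by omega
          simp [hf_def, this]
        rw [hts]
        have hterm : ∀ j ∈ range (i+1), (j:ℝ)^r * f j i
            = ((-1:ℝ)^(i+j) * (i.choose j : ℝ) * (j:ℝ)^r) * (α i * β ^ i / (Nat.factorial i)) := by
          intro j hj
          simp only [mem_range] at hj
          have hji : j ≤ i := by omega
          have hsgn : (-1:ℝ)^(i+j) = (-1:ℝ)^(i-j) := by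
            rw [show i + j = (i-j) + 2*j by omega, pow_add, pow_mul]
            norm_num
          rw [hf_def]
          simp only [if_pos hji]
          rw [hsgn]
          ring
        rw [sum_congr rfl hterm, ← sum_mul, stirling2_sum r i]
        field_simp
      rw [step1, step2, tsum_congr step3]
      apply tsum_eq_sum
      intro i hi
      simp only [mem_Icc, not_and_or, not_le] at hi
      rcases hi with hi | hi
      · interval_cases i
        have : stirling2 r 0 = 0 := by
          cases r with
          | zero => omega
          | succ n => rfl
        simp [this]
      · rw [stirling2_eq_zero_of_lt hi]
        simp
end

section
/- For every n ≥ 4, every integer k with 1 ≤ k ≤ n−2, and every integer t ≥ 0, the expected number of fixed points after the initial (n−k)-cycle and t random transpositions satisfies exactly E_{μ_{t+1}}[fix] = 1 + (k−1)·((n−3)/(n−1))^t. In particular, for k = 1 the expected number of fixed points equals 1 at every step. -/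
-- Common setup for the random (n-k)-cycle to transpositions walk on the symmetric group.
open Finset Filter Real

noncomputable section

/-- Convolution of two (probability) distributions on `S_n`. -/
def conv {n : ℕ} (μ ν : Equiv.Perm (Fin n) → ℝ) : Equiv.Perm (Fin n) → ℝ :=
  fun g => ∑ h : Equiv.Perm (Fin n), μ (g * h⁻¹) * ν h

/-- `t`-fold convolution power (with `μ^{*0}` the point mass at the identity). -/
def convPow {n : ℕ} (μ : Equiv.Perm (Fin n) → ℝ) : ℕ → (Equiv.Perm (Fin n) → ℝ)
  | 0 => fun g => if g = 1 then 1 else 0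
  | t + 1 => conv (convPow μ t) μ

/-- Uniform probability distribution on a finite set of permutations. -/
def unifOn {n : ℕ} (S : Finset (Equiv.Perm (Fin n))) : Equiv.Perm (Fin n) → ℝ :=
  fun g => if g ∈ S then (1 : ℝ) / S.card else 0

/-- The set of `(n-k)`-cycles of `S_n`: one cycle of length `n - k` and `k` fixed points. -/
def cycles (n k : ℕ) : Finset (Equiv.Perm (Fin n)) :=
  letI := Classical.decPred fun σ : Equiv.Perm (Fin n) => σ.IsCycle ∧ σ.support.card = n - k
  Finset.univ.filter fun σ : Equiv.Perm (Fin n) => σ.IsCycle ∧ σ.support.card = n - k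

/-- The set of transpositions of `S_n`. -/
def transpositions (n : ℕ) : Finset (Equiv.Perm (Fin n)) :=
  letI := Classical.decPred fun σ : Equiv.Perm (Fin n) => σ.IsSwap
  Finset.univ.filter fun σ : Equiv.Perm (Fin n) => σ.IsSwap

/-- The law `μ_{t+1} = ν_n * τ_n^{*t}` of the walk after the initial random `(n-k)`-cycle
and `t` random transpositions. -/
def walk (n k t : ℕ) : Equiv.Perm (Fin n) → ℝ :=
  conv (unifOn (cycles n k)) (convPow (unifOn (transpositions n)) t)

/-- The alternating group `A_n` as a finset. -/
def evenPerms (n : ℕ) : Finset (Equiv.Perm (Fin n)) :=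
  Finset.univ.filter fun σ => Equiv.Perm.sign σ = 1

/-- `S_n \ A_n` as a finset. -/
def oddPerms (n : ℕ) : Finset (Equiv.Perm (Fin n)) :=
  Finset.univ.filter fun σ => ¬ (Equiv.Perm.sign σ = 1)

/-- The stationary distribution `U_s` at step `s`: uniform on `A_n` if `s` and `n - k`
have the same parity, uniform on `S_n \ A_n` otherwise. -/
def stationary (n k s : ℕ) : Equiv.Perm (Fin n) → ℝ :=
  if s % 2 = (n - k) % 2 then unifOn (evenPerms n) else unifOn (oddPerms n)

/-- Total variation distance between two distributions on `S_n`. -/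
def tvDist {n : ℕ} (μ ν : Equiv.Perm (Fin n) → ℝ) : ℝ :=
  (1 / 2) * ∑ σ : Equiv.Perm (Fin n), |μ σ - ν σ|

/-- The number of fixed points of a permutation. -/
def fixCount {n : ℕ} (σ : Equiv.Perm (Fin n)) : ℕ :=
  (Finset.univ.filter fun i => σ i = i).card

end


-- ==================== auxiliary lemmas ====================

section Aux

variable {n : ℕ}

lemma sum_conv (μ ν : Equiv.Perm (Fin n) → ℝ) :
    ∑ g : Equiv.Perm (Fin n), conv μ ν g =
      (∑ g : Equiv.Perm (Fin n), μ g) * (∑ g : Equiv.Perm (Fin n), ν g) := by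
  unfold conv
  rw [Finset.sum_comm, Finset.mul_sum]
  refine Finset.sum_congr rfl fun h _ => ?_
  rw [← Finset.sum_mul]
  congr 1
  exact Fintype.sum_equiv (Equiv.mulRight h⁻¹) _ _ fun g => rfl

lemma conv_assoc (μ ν ρ : Equiv.Perm (Fin n) → ℝ) :
    conv (conv μ ν) ρ = conv μ (conv ν ρ) := by
  funext g
  unfold conv
  simp only [Finset.sum_mul, Finset.mul_sum]
  conv_rhs => rw [Finset.sum_comm]
  refine Finset.sum_congr rfl fun a _ => ?_
  refine Fintype.sum_equiv (Equiv.mulRight a) _ _ fun v => ?_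
  simp only [Equiv.coe_mulRight, mul_inv_rev, mul_inv_cancel_right, ← mul_assoc]

lemma conv_convPow_zero (μ τ : Equiv.Perm (Fin n) → ℝ) :
    conv μ (convPow τ 0) = μ := by
  funext g
  unfold conv convPow
  rw [Finset.sum_eq_single 1]
  · simp
  · intro h _ hne; simp [hne]
  · simp

lemma walk_succ (n k t : ℕ) :
    walk n k (t + 1) = conv (walk n k t) (unifOn (transpositions n)) := by
  unfold walk
  rw [show convPow (unifOn (transpositions n)) (t + 1)
      = conv (convPow (unifOn (transpositions n)) t) (unifOn (transpositions n)) from rfl,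
    ← conv_assoc]

lemma walk_zero (n k : ℕ) : walk n k 0 = unifOn (cycles n k) :=
  conv_convPow_zero _ _

lemma fixCount_real (σ : Equiv.Perm (Fin n)) :
    (fixCount σ : ℝ) = ∑ x : Fin n, (if σ x = x then (1 : ℝ) else 0) := by
  unfold fixCount
  rw [Finset.card_filter]
  push_cast
  rfl

lemma sum_split_pair {i j : Fin n} (hij : i ≠ j) (f : Fin n → ℝ) :
    ∑ x : Fin n, f x = (∑ x ∈ (Finset.univ : Finset (Fin n)) \ {i, j}, f x) + (f i + f j) := by
  rw [← Finset.sum_sdiff (Finset.subset_univ {i, j}), Finset.sum_pair hij]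

lemma fixCount_mul_swap (σ : Equiv.Perm (Fin n)) {i j : Fin n} (hij : i ≠ j) :
    (fixCount (σ * Equiv.swap i j) : ℝ) =
      (fixCount σ : ℝ) - (if σ i = i then (1:ℝ) else 0) - (if σ j = j then (1:ℝ) else 0)
        + (if σ j = i then (1:ℝ) else 0) + (if σ i = j then (1:ℝ) else 0) := by
  rw [fixCount_real (σ * Equiv.swap i j), fixCount_real σ,
    sum_split_pair hij (fun x => if (σ * Equiv.swap i j) x = x then (1:ℝ) else 0),
    sum_split_pair hij (fun x => if σ x = x then (1:ℝ) else 0)]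
  have hdiff : ∑ x ∈ (Finset.univ : Finset (Fin n)) \ {i, j},
      (if (σ * Equiv.swap i j) x = x then (1:ℝ) else 0) =
      ∑ x ∈ (Finset.univ : Finset (Fin n)) \ {i, j}, (if σ x = x then (1:ℝ) else 0) := by
    refine Finset.sum_congr rfl fun x hx => ?_
    simp only [Finset.mem_sdiff, Finset.mem_insert, Finset.mem_singleton] at hx
    have hxi : x ≠ i := fun h => hx.2 (Or.inl h)
    have hxj : x ≠ j := fun h => hx.2 (Or.inr h)
    simp [Equiv.Perm.mul_apply, Equiv.swap_apply_of_ne_of_ne hxi hxj]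
  rw [hdiff]
  simp only [Equiv.Perm.mul_apply, Equiv.swap_apply_left, Equiv.swap_apply_right]
  ring

lemma swap_eq_swap' {i j a b : Fin n} (hij : i ≠ j)
    (h : Equiv.swap i j = Equiv.swap a b) : (i = a ∧ j = b) ∨ (i = b ∧ j = a) := by
  have h1 : Equiv.swap a b i = j := by rw [← h]; exact Equiv.swap_apply_left i j
  by_cases hia : i = a
  · subst hia
    rw [Equiv.swap_apply_left] at h1
    exact Or.inl ⟨rfl, h1.symm⟩
  · by_cases hib : i = b
    · subst hib
      rw [Equiv.swap_apply_right] at h1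
      exact Or.inr ⟨rfl, h1.symm⟩
    · rw [Equiv.swap_apply_of_ne_of_ne hia hib] at h1
      exact absurd h1 hij

lemma sum_offDiag_swap (F : Equiv.Perm (Fin n) → ℝ) :
    ∑ p ∈ (Finset.univ : Finset (Fin n)).offDiag, F (Equiv.swap p.1 p.2) =
      2 * ∑ h ∈ transpositions n, F h := by
  classical
  have hmaps : ∀ p ∈ (Finset.univ : Finset (Fin n)).offDiag,
      Equiv.swap p.1 p.2 ∈ transpositions n := by
    intro p hp
    rw [Finset.mem_offDiag] at hp
    simp only [transpositions, Finset.mem_filter, Finset.mem_univ, true_and]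
    exact ⟨p.1, p.2, hp.2.2, rfl⟩
  rw [← Finset.sum_fiberwise_of_maps_to hmaps (fun p => F (Equiv.swap p.1 p.2)),
    Finset.mul_sum]
  refine Finset.sum_congr rfl fun h hh => ?_
  simp only [transpositions, Finset.mem_filter, Finset.mem_univ, true_and] at hh
  obtain ⟨a, b, hab, rfl⟩ := hh
  have hfib : (Finset.univ : Finset (Fin n)).offDiag.filter
      (fun p => Equiv.swap p.1 p.2 = Equiv.swap a b) = {(a, b), (b, a)} := by
    ext ⟨i, j⟩
    simp only [Finset.mem_filter, Finset.mem_offDiag, Finset.mem_univ, true_and,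
      Finset.mem_insert, Finset.mem_singleton, Prod.mk.injEq]
    constructor
    · rintro ⟨hij, heq⟩
      exact swap_eq_swap' hij heq
    · rintro (⟨rfl, rfl⟩ | ⟨rfl, rfl⟩)
      · exact ⟨hab, rfl⟩
      · exact ⟨hab.symm, Equiv.swap_comm _ _⟩
  have hval : ∀ p ∈ (Finset.univ : Finset (Fin n)).offDiag.filter
      (fun p => Equiv.swap p.1 p.2 = Equiv.swap a b),
      F (Equiv.swap p.1 p.2) = F (Equiv.swap a b) := by
    intro p hp
    rw [Finset.mem_filter] at hp
    rw [hp.2]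
  rw [Finset.sum_congr rfl hval, hfib,
    Finset.sum_pair (by simp only [ne_eq, Prod.mk.injEq, not_and]; exact fun h _ => hab h)]
  ring

lemma sum_offDiag_eq (f : Fin n × Fin n → ℝ) :
    ∑ p ∈ (Finset.univ : Finset (Fin n)).offDiag, f p =
      (∑ i : Fin n, ∑ j : Fin n, f (i, j)) - ∑ i : Fin n, f (i, i) := by
  classical
  have h1 : (∑ i : Fin n, ∑ j : Fin n, f (i, j)) =
      ∑ p ∈ (Finset.univ : Finset (Fin n)) ×ˢ Finset.univ, f p :=
    (Finset.sum_product _ _ _).symm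
  have hsplit := Finset.sum_filter_add_sum_filter_not
    ((Finset.univ : Finset (Fin n)) ×ˢ Finset.univ) (fun p => p.1 = p.2) f
  have hoff : ((Finset.univ : Finset (Fin n)) ×ˢ Finset.univ).filter (fun p => ¬ p.1 = p.2) =
      (Finset.univ : Finset (Fin n)).offDiag := by
    ext p
    simp [Finset.mem_offDiag]
  have hdiag : ∑ p ∈ ((Finset.univ : Finset (Fin n)) ×ˢ Finset.univ).filter
      (fun p => p.1 = p.2), f p = ∑ i : Fin n, f (i, i) := by
    refine Finset.sum_nbij' (fun p => p.1) (fun i => (i, i)) ?_ ?_ ?_ ?_ ?_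
    · intro p _; exact Finset.mem_univ _
    · intro i _; simp
    · rintro ⟨x, y⟩ hp
      simp only [Finset.mem_filter] at hp
      simp [hp.2]
    · intro i _; rfl
    · rintro ⟨x, y⟩ hp
      simp only [Finset.mem_filter] at hp
      rw [hp.2]
  rw [h1, ← hsplit, hoff, hdiag]
  ring

lemma sum_indicator_fix (σ : Equiv.Perm (Fin n)) :
    ∑ i : Fin n, (if σ i = i then (1:ℝ) else 0) = (fixCount σ : ℝ) :=
  (fixCount_real σ).symm

lemma sum_offDiag_fixCount (σ : Equiv.Perm (Fin n)) :
    ∑ p ∈ (Finset.univ : Finset (Fin n)).offDiag, (fixCount (σ * Equiv.swap p.1 p.2) : ℝ) =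
      ((n : ℝ) ^ 2 - 3 * n) * (fixCount σ : ℝ) + 2 * n := by
  classical
  have hcong : ∑ p ∈ (Finset.univ : Finset (Fin n)).offDiag,
      (fixCount (σ * Equiv.swap p.1 p.2) : ℝ) =
      ∑ p ∈ (Finset.univ : Finset (Fin n)).offDiag,
        ((fixCount σ : ℝ) - (if σ p.1 = p.1 then (1:ℝ) else 0)
          - (if σ p.2 = p.2 then (1:ℝ) else 0)
          + (if σ p.2 = p.1 then (1:ℝ) else 0) + (if σ p.1 = p.2 then (1:ℝ) else 0)) := by
    refine Finset.sum_congr rfl fun p hp => ?_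
    rw [Finset.mem_offDiag] at hp
    exact fixCount_mul_swap σ hp.2.2
  rw [hcong, sum_offDiag_eq]
  have hB1 : ∑ i : Fin n, ∑ j : Fin n, (if σ j = i then (1:ℝ) else 0) = n := by
    rw [Finset.sum_comm]; simp
  have hB2 : ∑ i : Fin n, ∑ j : Fin n, (if σ i = j then (1:ℝ) else 0) = n := by simp
  have e1 : ∑ i : Fin n, ∑ j : Fin n,
      ((fixCount σ : ℝ) - (if σ i = i then (1:ℝ) else 0) - (if σ j = j then (1:ℝ) else 0)
        + (if σ j = i then (1:ℝ) else 0) + (if σ i = j then (1:ℝ) else 0)) =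
      (n:ℝ)^2 * (fixCount σ : ℝ) - n * (fixCount σ : ℝ) - n * (fixCount σ : ℝ) + n + n := by
    simp only [Finset.sum_sub_distrib, Finset.sum_add_distrib, hB1, hB2,
      Finset.sum_const, Finset.card_univ, Fintype.card_fin, nsmul_eq_mul,
      sum_indicator_fix, ← Finset.mul_sum]
    ring
  have e2 : ∑ i : Fin n,
      ((fixCount σ : ℝ) - (if σ i = i then (1:ℝ) else 0) - (if σ i = i then (1:ℝ) else 0)
        + (if σ i = i then (1:ℝ) else 0) + (if σ i = i then (1:ℝ) else 0)) =
      (n:ℝ) * (fixCount σ : ℝ) := by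
    simp only [Finset.sum_sub_distrib, Finset.sum_add_distrib, Finset.sum_const,
      Finset.card_univ, Fintype.card_fin, nsmul_eq_mul, sum_indicator_fix]
    ring
  rw [e1, e2]
  ring

lemma card_transpositions_real (hn : 2 ≤ n) :
    ((transpositions n).card : ℝ) = ((n:ℝ)^2 - n) / 2 := by
  have h := sum_offDiag_swap (n := n) (fun _ => (1:ℝ))
  simp only [Finset.sum_const, nsmul_eq_mul, mul_one] at h
  have hcard : ((Finset.univ : Finset (Fin n)).offDiag.card : ℝ) = (n:ℝ)^2 - n := by
    rw [Finset.offDiag_card]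
    have h1 : (Finset.univ : Finset (Fin n)).card = n := by simp
    rw [h1]
    have h2 : n ≤ n * n := Nat.le_mul_of_pos_left n (by omega)
    push_cast [Nat.cast_sub h2]
    ring
  rw [hcard] at h
  linarith

lemma transpositions_nonempty (hn : 2 ≤ n) : (transpositions n).Nonempty := by
  obtain ⟨m, rfl⟩ : ∃ m, n = m + 2 := ⟨n - 2, by omega⟩
  refine ⟨Equiv.swap ⟨0, by omega⟩ ⟨1, by omega⟩, ?_⟩
  simp only [transpositions, Finset.mem_filter, Finset.mem_univ, true_and]
  exact ⟨_, _, by simp [Fin.ext_iff], rfl⟩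

lemma sum_transpositions_fixCount (σ : Equiv.Perm (Fin n)) :
    ∑ h ∈ transpositions n, (fixCount (σ * h) : ℝ) =
      (((n : ℝ) ^ 2 - 3 * n) * (fixCount σ : ℝ) + 2 * n) / 2 := by
  have h := sum_offDiag_swap (n := n) (fun h => (fixCount (σ * h) : ℝ))
  rw [sum_offDiag_fixCount σ] at h
  linarith

lemma step_lemma (hn : 4 ≤ n) (μ : Equiv.Perm (Fin n) → ℝ) :
    ∑ g : Equiv.Perm (Fin n), (fixCount g : ℝ) * conv μ (unifOn (transpositions n)) g =
      (((n:ℝ) - 3) / ((n:ℝ) - 1)) * (∑ g : Equiv.Perm (Fin n), (fixCount g : ℝ) * μ g)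
        + (2 / ((n:ℝ) - 1)) * (∑ g : Equiv.Perm (Fin n), μ g) := by
  classical
  have hn2 : (2:ℕ) ≤ n := by omega
  have hTcard : ((transpositions n).card : ℝ) = ((n:ℝ)^2 - n) / 2 :=
    card_transpositions_real hn2
  have hnR : (4:ℝ) ≤ (n:ℝ) := by exact_mod_cast hn
  have step1 : ∑ g : Equiv.Perm (Fin n), (fixCount g : ℝ) * conv μ (unifOn (transpositions n)) g
      = ∑ h ∈ transpositions n, (1 / ((transpositions n).card : ℝ)) *
          ∑ σ : Equiv.Perm (Fin n), (fixCount (σ * h) : ℝ) * μ σ := by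
    unfold conv unifOn
    simp only [Finset.mul_sum]
    rw [Finset.sum_comm,
      (Finset.sum_subset (Finset.subset_univ (transpositions n)) ?_).symm]
    · refine Finset.sum_congr rfl fun h hh => ?_
      refine Fintype.sum_equiv (Equiv.mulRight h⁻¹) _ _ fun v => ?_
      simp only [Equiv.coe_mulRight, inv_mul_cancel_right, if_pos hh]
      ring
    · intro h _ hh
      simp [hh]
  rw [step1]
  have step2 : ∀ h ∈ transpositions n, True := fun _ _ => trivial
  rw [← Finset.mul_sum, Finset.sum_comm]
  have step3 : ∀ σ : Equiv.Perm (Fin n),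
      ∑ h ∈ transpositions n, (fixCount (σ * h) : ℝ) * μ σ =
      ((((n:ℝ)^2 - 3*n) * (fixCount σ : ℝ) + 2*n) / 2) * μ σ := by
    intro σ
    rw [← Finset.sum_mul, sum_transpositions_fixCount σ]
  rw [Finset.sum_congr rfl fun σ _ => step3 σ]
  rw [hTcard, Finset.mul_sum, Finset.mul_sum, Finset.mul_sum, ← Finset.sum_add_distrib]
  refine Finset.sum_congr rfl fun σ _ => ?_
  have h1 : (n:ℝ) - 1 ≠ 0 := by linarith
  have h2 : (n:ℝ)^2 - n ≠ 0 := by nlinarith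
  field_simp

lemma sum_unifOn {S : Finset (Equiv.Perm (Fin n))} (hS : S.Nonempty) :
    ∑ g : Equiv.Perm (Fin n), unifOn S g = 1 := by
  classical
  unfold unifOn
  rw [Finset.sum_ite_mem, Finset.univ_inter, Finset.sum_const, nsmul_eq_mul]
  have hS0 : (S.card : ℝ) ≠ 0 := by
    exact_mod_cast (Finset.card_pos.mpr hS).ne'
  field_simp

lemma fixCount_of_mem_cycles {k : ℕ} (hk : k ≤ n) {g : Equiv.Perm (Fin n)}
    (hg : g ∈ cycles n k) : fixCount g = k := by
  classical
  simp only [cycles, Finset.mem_filter, Finset.mem_univ, true_and] at hg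
  have hsupp : g.support.card = n - k := hg.2
  have hsplit : (Finset.univ.filter fun i => g i = i).card
      + (Finset.univ.filter fun i => ¬ g i = i).card = n := by
    rw [Finset.card_filter_add_card_filter_not]
    simp
  have hsupp' : (Finset.univ.filter fun i => ¬ g i = i).card = n - k := by
    rw [← hsupp]
    rfl
  unfold fixCount
  omega

lemma cycles_nonempty {k : ℕ} (hn : 4 ≤ n) (hk1 : 1 ≤ k) (hk2 : k ≤ n - 2) :
    (cycles n k).Nonempty := by
  classical
  obtain ⟨m, rfl⟩ : ∃ m, n = m + 1 := ⟨n - 1, by omega⟩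
  have hlt : m + 1 - k - 1 < m + 1 := by omega
  set i : Fin (m + 1) := ⟨m + 1 - k - 1, hlt⟩ with hi
  have hi0 : i ≠ 0 := by
    simp only [hi, Fin.ext_iff, Fin.val_zero, ne_eq]
    omega
  refine ⟨Fin.cycleRange i, ?_⟩
  simp only [cycles, Finset.mem_filter, Finset.mem_univ, true_and]
  refine ⟨Fin.isCycle_cycleRange hi0, ?_⟩
  have hct := Equiv.Perm.sum_cycleType (Fin.cycleRange i)
  rw [Fin.cycleType_cycleRange hi0, Multiset.sum_singleton] at hct
  rw [← hct]
  simp only [hi]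
  omega

end Aux

/-- For every `n ≥ 4`, `1 ≤ k ≤ n - 2` and `t ≥ 0`, the expected number of fixed points
after the initial `(n-k)`-cycle and `t` random transpositions is exactly
`1 + (k-1)((n-3)/(n-1))^t`; in particular it equals `1` at every step when `k = 1`. -/
theorem fixCount_expectation_exact (n k t : ℕ) (hn : 4 ≤ n) (hk1 : 1 ≤ k) (hk2 : k ≤ n - 2) :
    (∑ σ : Equiv.Perm (Fin n), (fixCount σ : ℝ) * walk n k t σ =
      1 + ((k : ℝ) - 1) * (((n : ℝ) - 3) / ((n : ℝ) - 1)) ^ t) ∧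
    (k = 1 → ∑ σ : Equiv.Perm (Fin n), (fixCount σ : ℝ) * walk n k t σ = 1) := by
  classical
  have hnR : (4:ℝ) ≤ (n:ℝ) := by exact_mod_cast hn
  have hn1 : (n:ℝ) - 1 ≠ 0 := by linarith
  have hC : (cycles n k).Nonempty := cycles_nonempty hn hk1 hk2
  have hT : (transpositions n).Nonempty := transpositions_nonempty (by omega)
  have hmass : ∀ s, ∑ g : Equiv.Perm (Fin n), walk n k s g = 1 := by
    intro s
    induction s with
    | zero => rw [walk_zero]; exact sum_unifOn hC
    | succ s ih => rw [walk_succ, sum_conv, ih, sum_unifOn hT, one_mul]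
  have hmain : ∀ s, ∑ σ : Equiv.Perm (Fin n), (fixCount σ : ℝ) * walk n k s σ =
      1 + ((k : ℝ) - 1) * (((n : ℝ) - 3) / ((n : ℝ) - 1)) ^ s := by
    intro s
    induction s with
    | zero =>
      rw [walk_zero]
      have hCpos : ((cycles n k).card : ℝ) ≠ 0 := by
        exact_mod_cast (Finset.card_pos.mpr hC).ne'
      have hval : ∑ σ : Equiv.Perm (Fin n), (fixCount σ : ℝ) * unifOn (cycles n k) σ
          = (k : ℝ) := by
        unfold unifOn
        rw [(Finset.sum_subset (Finset.subset_univ (cycles n k)) ?_).symm]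
        · have hcongr : ∀ g ∈ cycles n k,
              (fixCount g : ℝ) * (if g ∈ cycles n k then (1:ℝ) / (cycles n k).card else 0)
              = (k : ℝ) / (cycles n k).card := by
            intro g hg
            rw [if_pos hg, fixCount_of_mem_cycles (by omega) hg]
            ring
          rw [Finset.sum_congr rfl hcongr, Finset.sum_const, nsmul_eq_mul]
          field_simp
        · intro g _ hg
          simp [hg]
      rw [hval, pow_zero]
      ring
    | succ s ih =>
      rw [walk_succ, step_lemma hn, ih, hmass s, pow_succ]
      field_simp
      ring
  exact ⟨hmain t, fun hk => by rw [hmain t, hk]; simp⟩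
end

section
/- Let λ be a Young diagram with n cells and let m be an integer with m > n/2. Then there exists at most one Young diagram ξ contained in λ with n − m cells such that the skew diagram λ∖ξ is a rim hook; that is, there is at most one way to remove a rim hook of length m from λ. -/
open Finset

/-- Two cells are edgewise adjacent if they share an edge. -/
def CellAdjacent (c d : ℕ × ℕ) : Prop :=
  (c.1 = d.1 ∧ (c.2 = d.2 + 1 ∨ d.2 = c.2 + 1)) ∨
  (c.2 = d.2 ∧ (c.1 = d.1 + 1 ∨ d.1 = c.1 + 1))

/-- A set of cells is edgewise connected if any two of its cells are joined by a path of
its cells in which consecutive cells share an edge. -/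
def EdgeConnected (s : Finset (ℕ × ℕ)) : Prop :=
  ∀ a ∈ s, ∀ b ∈ s,
    Relation.ReflTransGen (fun x y => x ∈ s ∧ y ∈ s ∧ CellAdjacent x y) a b

/-- A rim hook: a nonempty, edgewise connected set of cells containing no 2×2 square. -/
def IsRimHook (s : Finset (ℕ × ℕ)) : Prop :=
  s.Nonempty ∧ EdgeConnected s ∧
    ∀ i j : ℕ, ¬((i, j) ∈ s ∧ (i + 1, j) ∈ s ∧ (i, j + 1) ∈ s ∧ (i + 1, j + 1) ∈ s)

/-- The diagonal index of a cell. -/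
def cdiag (c : ℕ × ℕ) : ℤ := (c.2 : ℤ) - (c.1 : ℤ)

lemma adj_diag {x y : ℕ × ℕ} (h : CellAdjacent x y) :
    cdiag y = cdiag x + 1 ∨ cdiag x = cdiag y + 1 := by
  obtain ⟨h1, h2⟩ | ⟨h1, h2⟩ := h <;> simp only [cdiag] <;> omega

/-- cells of a removable skew shape lie on the rim. -/
lemma rim_prop {lam ξ : YoungDiagram} (hr : IsRimHook (lam.cells \ ξ.cells)) :
    ∀ c ∈ lam.cells \ ξ.cells, (c.1 + 1, c.2 + 1) ∉ lam := by
  rintro ⟨i, j⟩ hc hmem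
  simp only [Finset.mem_sdiff, YoungDiagram.mem_cells] at hc
  have hnot : ∀ a b : ℕ, (a, b) ∈ lam → i ≤ a → j ≤ b → (a, b) ∈ lam.cells \ ξ.cells := by
    intro a b hab ha hb
    simp only [Finset.mem_sdiff, YoungDiagram.mem_cells]
    refine ⟨hab, fun hξ => hc.2 (ξ.up_left_mem ha hb hξ)⟩
  have h00 : (i, j) ∈ lam.cells \ ξ.cells := by
    simp only [Finset.mem_sdiff, YoungDiagram.mem_cells]; exact hc
  have h11 : (i + 1, j + 1) ∈ lam.cells \ ξ.cells := hnot _ _ hmem (by omega) (by omega)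
  have h10 : (i + 1, j) ∈ lam.cells \ ξ.cells :=
    hnot _ _ (lam.up_left_mem le_rfl (by omega) hmem) (by omega) le_rfl
  have h01 : (i, j + 1) ∈ lam.cells \ ξ.cells :=
    hnot _ _ (lam.up_left_mem (by omega) le_rfl hmem) le_rfl (by omega)
  exact hr.2.2 i j ⟨h00, h10, h01, h11⟩

/-- Cells on the rim are determined by their diagonal. -/
lemma diag_inj {lam : YoungDiagram} {c c' : ℕ × ℕ} (hc : c ∈ lam) (hc' : c' ∈ lam)
    (h1 : (c.1 + 1, c.2 + 1) ∉ lam) (h2 : (c'.1 + 1, c'.2 + 1) ∉ lam)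
    (hd : cdiag c = cdiag c') : c = c' := by
  obtain ⟨i, j⟩ := c; obtain ⟨x, y⟩ := c'
  simp only [cdiag] at hd
  simp only at h1 h2 ⊢
  rcases lt_trichotomy i x with h | h | h
  · exact absurd (lam.up_left_mem (by omega) (by omega) hc') h1
  · have : j = y := by omega
    simp [h, this]
  · exact absurd (lam.up_left_mem (by omega) (by omega) hc) h2

lemma exists_diag_between {S : Finset (ℕ × ℕ)} {a b : ℕ × ℕ}
    (h : Relation.ReflTransGen (fun x y => x ∈ S ∧ y ∈ S ∧ CellAdjacent x y) a b)
    (ha : a ∈ S) :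
    ∀ e : ℤ, min (cdiag a) (cdiag b) ≤ e → e ≤ max (cdiag a) (cdiag b) → ∃ c ∈ S, cdiag c = e := by
  induction h with
  | refl => intro e hl hr; exact ⟨a, ha, by omega⟩
  | @tail p q hap hpq ih =>
    intro e hl hr
    obtain ⟨hpS, hqS, hadj⟩ := hpq
    have hd := adj_diag hadj
    rcases le_or_gt e (max (cdiag a) (cdiag p)) with h3 | h3
    · rcases le_or_gt (min (cdiag a) (cdiag p)) e with h4 | h4
      · exact ih e h4 h3
      · exact ⟨q, hqS, by omega⟩
    · exact ⟨q, hqS, by omega⟩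

/-- The key structural data extracted from a removable rim hook. -/
lemma key (lam ξ : YoungDiagram) (hle : ξ ≤ lam) (hr : IsRimHook (lam.cells \ ξ.cells)) :
    ∃ i j x y : ℕ, (i, j) ∈ lam ∧ (x, y) ∈ lam ∧ (i, j + 1) ∉ lam ∧ (x + 1, y) ∉ lam ∧
      i ≤ x ∧ y ≤ j ∧
      ((j : ℤ) - i) - ((y : ℤ) - x) + 1 = (lam.cells \ ξ.cells).card ∧
      (lam.cells \ ξ.cells).image cdiag = Finset.Icc ((y : ℤ) - x) ((j : ℤ) - i) := by
  set S := lam.cells \ ξ.cells with hS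
  obtain ⟨hne, hcon, h22⟩ := hr
  have hrim : ∀ c ∈ S, (c.1 + 1, c.2 + 1) ∉ lam := rim_prop ⟨hne, hcon, h22⟩
  have hsub : S ⊆ lam.cells := Finset.sdiff_subset
  have hmemS : ∀ c ∈ S, c ∈ lam ∧ c ∉ ξ := by
    intro c hc
    rw [hS, Finset.mem_sdiff, YoungDiagram.mem_cells] at hc; exact hc
  obtain ⟨u, huS, humax⟩ := S.exists_max_image cdiag hne
  obtain ⟨v, hvS, hvmin⟩ := S.exists_min_image cdiag hne
  obtain ⟨hulam, huξ⟩ := hmemS u huS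
  obtain ⟨hvlam, hvξ⟩ := hmemS v hvS
  -- claim A : (u.1, u.2+1) ∉ lam
  have hA : (u.1, u.2 + 1) ∉ lam := by
    intro hmem
    by_cases hx : (u.1, u.2 + 1) ∈ ξ
    · exact huξ (by simpa using ξ.up_left_mem le_rfl (by omega) hx)
    · have hin : (u.1, u.2 + 1) ∈ S := by
        simp only [hS, Finset.mem_sdiff, YoungDiagram.mem_cells]; exact ⟨hmem, hx⟩
      have := humax _ hin
      simp only [cdiag] at this; omega
  have hB : (v.1 + 1, v.2) ∉ lam := by
    intro hmem
    by_cases hx : (v.1 + 1, v.2) ∈ ξ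
    · exact hvξ (by simpa using ξ.up_left_mem (by omega) le_rfl hx)
    · have hin : (v.1 + 1, v.2) ∈ S := by
        simp only [hS, Finset.mem_sdiff, YoungDiagram.mem_cells]; exact ⟨hmem, hx⟩
      have := hvmin _ hin
      simp only [cdiag] at this; omega
  have hdvu : cdiag v ≤ cdiag u := hvmin u huS
  -- y ≤ j : v.2 ≤ u.2
  have hyj : v.2 ≤ u.2 := by
    by_contra hcon2
    push_neg at hcon2
    have hx : u.1 + 1 ≤ v.1 := by simp only [cdiag] at hdvu; omega
    exact hA (lam.up_left_mem (by omega) (by omega) (show (v.1, v.2) ∈ lam from hvlam))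
  have hix : u.1 ≤ v.1 := by
    by_contra hcon2
    push_neg at hcon2
    exact hB (lam.up_left_mem (by omega) (by omega) (show (u.1, u.2) ∈ lam from hulam))
  -- image is an interval
  have himg : S.image cdiag = Finset.Icc (cdiag v) (cdiag u) := by
    apply Finset.Subset.antisymm
    · intro e he
      obtain ⟨c, hc, rfl⟩ := Finset.mem_image.mp he
      exact Finset.mem_Icc.mpr ⟨hvmin c hc, humax c hc⟩
    · intro e he
      rw [Finset.mem_Icc] at he
      obtain ⟨c, hc, hceq⟩ := exists_diag_between (hcon v hvS u huS) hvS e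
        (by omega) (by omega)
      exact Finset.mem_image.mpr ⟨c, hc, hceq⟩
  have hinj : Set.InjOn cdiag S := by
    intro c hc c' hc' hcc
    obtain ⟨hcl, -⟩ := hmemS c hc
    obtain ⟨hcl', -⟩ := hmemS c' hc'
    exact diag_inj hcl hcl' (hrim c hc) (hrim c' hc') hcc
  have hcardimg : S.card = (S.image cdiag).card := (Finset.card_image_of_injOn hinj).symm
  have hlen : cdiag u - cdiag v + 1 = (S.card : ℤ) := by
    rw [hcardimg, himg, Int.card_Icc]
    omega
  refine ⟨u.1, u.2, v.1, v.2, hulam, hvlam, hA, hB, hix, hyj, ?_, ?_⟩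
  · simpa only [cdiag] using hlen
  · simpa only [cdiag] using himg

/-- The main counting contradiction: two removable rim hooks with distinct diagonals. -/
lemma final_contra (lam : YoungDiagram) (k : ℕ) {i₁ j₁ x₁ y₁ i₂ j₂ x₂ y₂ : ℕ}
    (hu1 : (i₁, j₁) ∈ lam) (hv1 : (x₁, y₁) ∈ lam)
    (hu2 : (i₂, j₂) ∈ lam) (hv2 : (x₂, y₂) ∈ lam)
    (hA1 : (i₁, j₁ + 1) ∉ lam) (hB2 : (x₂ + 1, y₂) ∉ lam)
    (hix1 : i₁ ≤ x₁) (hyj1 : y₁ ≤ j₁) (hix2 : i₂ ≤ x₂) (hyj2 : y₂ ≤ j₂)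
    (hlen1 : ((j₁ : ℤ) - i₁) - ((y₁ : ℤ) - x₁) + 1 = k)
    (hlen2 : ((j₂ : ℤ) - i₂) - ((y₂ : ℤ) - x₂) + 1 = k)
    (hlt : (j₁ : ℤ) - i₁ < (j₂ : ℤ) - i₂)
    (hcard : lam.card < 2 * k) : False := by
  -- i₂ < i₁
  have hii : i₂ < i₁ := by
    by_contra hcon
    push_neg at hcon
    exact hA1 (lam.up_left_mem hcon (by omega) hu2)
  -- y₁ < y₂
  have hyy : y₁ < y₂ := by
    by_contra hcon
    push_neg at hcon
    exact hB2 (lam.up_left_mem (by omega) hcon hv1)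
  -- the five disjoint pieces
  set P₁ : Finset (ℕ × ℕ) := {i₁} ×ˢ Finset.Icc y₁ j₁ with hP₁
  set P₂ : Finset (ℕ × ℕ) := Finset.Ioc i₁ x₁ ×ˢ {y₁} with hP₂
  set P₃ : Finset (ℕ × ℕ) := {i₂} ×ˢ Finset.Icc y₂ j₂ with hP₃
  set P₄ : Finset (ℕ × ℕ) := Finset.Ioc i₂ x₂ ×ˢ {y₂} with hP₄
  set P₄' : Finset (ℕ × ℕ) := P₄ \ P₁ with hP₄'
  have hc1 : P₁.card = j₁ + 1 - y₁ := by simp [hP₁, Nat.card_Icc]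
  have hc2 : P₂.card = x₁ - i₁ := by simp [hP₂, Nat.card_Ioc]
  have hc3 : P₃.card = j₂ + 1 - y₂ := by simp [hP₃, Nat.card_Icc]
  have hc4 : x₂ - i₂ ≤ P₄'.card + 1 := by
    have hsub : P₄ ⊆ P₄' ∪ {(i₁, y₂)} := by
      intro c hc
      by_cases hcP : c ∈ P₁
      · have h1 : c.1 = i₁ := by
          simp only [hP₁, Finset.mem_product, Finset.mem_singleton] at hcP
          exact hcP.1
        have h2 : c.2 = y₂ := by
          simp only [hP₄, Finset.mem_product, Finset.mem_singleton] at hc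
          exact hc.2
        apply Finset.mem_union_right
        simp [← h1, ← h2]
      · exact Finset.mem_union_left _ (Finset.mem_sdiff.mpr ⟨hc, hcP⟩)
    have := Finset.card_le_card hsub
    have hcu := Finset.card_union_le P₄' {(i₁, y₂)}
    have hc4' : P₄.card = x₂ - i₂ := by simp [hP₄, Nat.card_Ioc]
    simp only [Finset.card_singleton] at hcu
    omega
  -- disjointness
  have hd12 : Disjoint P₁ P₂ := by
    rw [Finset.disjoint_left]
    rintro ⟨a, b⟩ h1 h2
    simp only [hP₁, hP₂, Finset.mem_product, Finset.mem_singleton, Finset.mem_Ioc,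
      Finset.mem_Icc] at h1 h2
    omega
  have hd13 : Disjoint P₁ P₃ := by
    rw [Finset.disjoint_left]
    rintro ⟨a, b⟩ h1 h2
    simp only [hP₁, hP₃, Finset.mem_product, Finset.mem_singleton, Finset.mem_Icc] at h1 h2
    omega
  have hd14 : Disjoint P₁ P₄' := Finset.disjoint_sdiff
  have hd23 : Disjoint P₂ P₃ := by
    rw [Finset.disjoint_left]
    rintro ⟨a, b⟩ h1 h2
    simp only [hP₂, hP₃, Finset.mem_product, Finset.mem_singleton, Finset.mem_Ioc,
      Finset.mem_Icc] at h1 h2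
    omega
  have hd24 : Disjoint P₂ P₄' := by
    apply Finset.disjoint_left.mpr
    rintro ⟨a, b⟩ h1 h2
    have h2' := Finset.mem_sdiff.mp h2
    simp only [hP₂, hP₄, Finset.mem_product, Finset.mem_singleton, Finset.mem_Ioc] at h1 h2'
    omega
  have hd34 : Disjoint P₃ P₄' := by
    apply Finset.disjoint_left.mpr
    rintro ⟨a, b⟩ h1 h2
    have h2' := Finset.mem_sdiff.mp h2
    simp only [hP₃, hP₄, Finset.mem_product, Finset.mem_singleton, Finset.mem_Ioc,
      Finset.mem_Icc] at h1 h2'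
    omega
  set T : Finset (ℕ × ℕ) := P₁ ∪ P₂ ∪ P₃ ∪ P₄' with hT
  have hd00 : (0, 0) ∉ T := by
    simp only [hT, Finset.mem_union, not_or]
    refine ⟨⟨⟨?_, ?_⟩, ?_⟩, ?_⟩
    · simp only [hP₁, Finset.mem_product, Finset.mem_singleton, Finset.mem_Icc]; omega
    · simp only [hP₂, Finset.mem_product, Finset.mem_singleton, Finset.mem_Ioc]; omega
    · simp only [hP₃, Finset.mem_product, Finset.mem_singleton, Finset.mem_Icc]; omega
    · intro h
      have := (Finset.mem_sdiff.mp h).1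
      simp only [hP₄, Finset.mem_product, Finset.mem_singleton, Finset.mem_Ioc] at this
      omega
  have hTcard : 2 * k ≤ (insert ((0 : ℕ), (0 : ℕ)) T).card := by
    rw [Finset.card_insert_of_notMem hd00, hT]
    rw [Finset.card_union_of_disjoint (by
      simp only [Finset.disjoint_union_left]
      exact ⟨⟨hd14, hd24⟩, hd34⟩)]
    rw [Finset.card_union_of_disjoint (by
      simp only [Finset.disjoint_union_left]
      exact ⟨hd13, hd23⟩)]
    rw [Finset.card_union_of_disjoint hd12]
    omega
  -- all cells are in lam
  have hTsub : insert ((0 : ℕ), (0 : ℕ)) T ⊆ lam.cells := by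
    intro c hc
    rw [YoungDiagram.mem_cells]
    rw [Finset.mem_insert] at hc
    rcases hc with rfl | hc
    · exact lam.up_left_mem (by omega) (by omega) hu1
    · simp only [hT, Finset.mem_union] at hc
      rcases hc with ((hc | hc) | hc) | hc
      · simp only [hP₁, Finset.mem_product, Finset.mem_singleton, Finset.mem_Icc] at hc
        obtain ⟨a, b⟩ := c
        simp only at hc
        exact lam.up_left_mem (by omega) (by omega) hu1
      · simp only [hP₂, Finset.mem_product, Finset.mem_singleton, Finset.mem_Ioc] at hc
        obtain ⟨a, b⟩ := c
        simp only at hc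
        exact lam.up_left_mem (by omega) (by omega) hv1
      · simp only [hP₃, Finset.mem_product, Finset.mem_singleton, Finset.mem_Icc] at hc
        obtain ⟨a, b⟩ := c
        simp only at hc
        exact lam.up_left_mem (by omega) (by omega) hu2
      · have hc' := (Finset.mem_sdiff.mp hc).1
        simp only [hP₄, Finset.mem_product, Finset.mem_singleton, Finset.mem_Ioc] at hc'
        obtain ⟨a, b⟩ := c
        simp only at hc'
        exact lam.up_left_mem (by omega) (by omega) hv2
  have := Finset.card_le_card hTsub
  rw [YoungDiagram.card] at *
  omega

/-- For a Young diagram `λ` with `n` cells and `m > n/2`, there is at most one way to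
remove a rim hook of length `m` from `λ`. -/
theorem rimHook_removal_unique (n m : ℕ) (hm : n < 2 * m) (lam : YoungDiagram)
    (hcard : lam.card = n) (ξ₁ ξ₂ : YoungDiagram) (h1 : ξ₁ ≤ lam) (h2 : ξ₂ ≤ lam)
    (hc1 : ξ₁.card = n - m) (hc2 : ξ₂.card = n - m)
    (hr1 : IsRimHook (lam.cells \ ξ₁.cells)) (hr2 : IsRimHook (lam.cells \ ξ₂.cells)) :
    ξ₁ = ξ₂ := by
  set S₁ := lam.cells \ ξ₁.cells with hS₁
  set S₂ := lam.cells \ ξ₂.cells with hS₂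
  have hsub1 : ξ₁.cells ⊆ lam.cells := h1
  have hsub2 : ξ₂.cells ⊆ lam.cells := h2
  have hcS1 : S₁.card = n - (n - m) := by
    rw [hS₁, Finset.card_sdiff_of_subset hsub1]
    simp [YoungDiagram.card] at hcard hc1 ⊢
    omega
  have hcS2 : S₂.card = n - (n - m) := by
    rw [hS₂, Finset.card_sdiff_of_subset hsub2]
    simp [YoungDiagram.card] at hcard hc2 ⊢
    omega
  have hn1 : 1 ≤ n := by
    obtain ⟨c, hc⟩ := hr1.1
    have : c ∈ lam.cells := Finset.sdiff_subset hc
    have : 0 < lam.cells.card := Finset.card_pos.mpr ⟨c, this⟩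
    rw [YoungDiagram.card] at hcard
    omega
  set k := n - (n - m) with hk
  have hnk : n < 2 * k := by omega
  obtain ⟨i₁, j₁, x₁, y₁, hu1, hv1, hA1, hB1, hix1, hyj1, hlen1, himg1⟩ := key lam ξ₁ h1 hr1
  obtain ⟨i₂, j₂, x₂, y₂, hu2, hv2, hA2, hB2, hix2, hyj2, hlen2, himg2⟩ := key lam ξ₂ h2 hr2
  rw [← hS₁] at himg1
  rw [← hS₁, hcS1] at hlen1
  rw [← hS₂] at himg2
  rw [← hS₂, hcS2] at hlen2
  have hrim1 : ∀ c ∈ S₁, (c.1 + 1, c.2 + 1) ∉ lam := rim_prop hr1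
  have hrim2 : ∀ c ∈ S₂, (c.1 + 1, c.2 + 1) ∉ lam := rim_prop hr2
  have hlamcard : lam.card < 2 * k := by omega
  rcases lt_trichotomy ((j₁ : ℤ) - i₁) ((j₂ : ℤ) - i₂) with hlt | heq | hlt
  · exact absurd (final_contra lam k hu1 hv1 hu2 hv2 hA1 hB2 hix1 hyj1 hix2 hyj2
      hlen1 hlen2 hlt hlamcard) (by simp)
  · -- equal diagonals: S₁ = S₂
    have hiv : ((y₁ : ℤ) - x₁) = ((y₂ : ℤ) - x₂) := by omega
    have hSsub : ∀ (S S' : Finset (ℕ × ℕ)), S ⊆ lam.cells → S' ⊆ lam.cells →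
        (∀ c ∈ S, (c.1 + 1, c.2 + 1) ∉ lam) → (∀ c ∈ S', (c.1 + 1, c.2 + 1) ∉ lam) →
        S.image cdiag = S'.image cdiag → S ⊆ S' := by
      intro S S' hS hS' hr hr' himg c hc
      have : cdiag c ∈ S'.image cdiag := by
        rw [← himg]
        exact Finset.mem_image_of_mem cdiag hc
      obtain ⟨c', hc', hceq⟩ := Finset.mem_image.mp this
      have : c = c' := (diag_inj (by exact hS' hc') (by exact hS hc)
        (hr' c' hc') (hr c hc) hceq).symm
      rwa [this]
    have hSeq : S₁ = S₂ := by
      have he : S₁.image cdiag = S₂.image cdiag := by rw [himg1, himg2, heq, hiv]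
      exact Finset.Subset.antisymm
        (hSsub S₁ S₂ Finset.sdiff_subset Finset.sdiff_subset hrim1 hrim2 he)
        (hSsub S₂ S₁ Finset.sdiff_subset Finset.sdiff_subset hrim2 hrim1 he.symm)
    have : ξ₁.cells = ξ₂.cells := by
      have h₁ : ξ₁.cells = lam.cells \ S₁ := by
        rw [hS₁]
        ext c
        simp only [Finset.mem_sdiff, not_and, not_not]
        constructor
        · intro hc; exact ⟨hsub1 hc, fun _ => hc⟩
        · intro ⟨hc, hc'⟩; exact hc' hc
      have h₂ : ξ₂.cells = lam.cells \ S₂ := by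
        rw [hS₂]
        ext c
        simp only [Finset.mem_sdiff, not_and, not_not]
        constructor
        · intro hc; exact ⟨hsub2 hc, fun _ => hc⟩
        · intro ⟨hc, hc'⟩; exact hc' hc
      rw [h₁, h₂, hSeq]
    exact YoungDiagram.ext this
  · exact absurd (final_contra lam k hu2 hv2 hu1 hv1 hA2 hB1 hix2 hyj2 hix1 hyj1
      hlen2 hlen1 hlt hlamcard) (by simp)
end

section
/- Let n ≥ 2 and let λ = (λ_1 ≥ λ_2 ≥ … ≥ λ_m > 0) be a partition of n (with λ_2 = 0 if m = 1). Then r(λ) ≤ (λ_2 − 3 + λ_1(λ_1 − λ_2 + 2)/n)/(n−1). -/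
open Finset

/-- For a partition `λ` of `n ≥ 2` (given as an antitone function `f : ℕ → ℕ` listing the
parts `λ_{i+1} = f i`, supported on `{0, …, n-1}`), the normalized transposition character
`r(λ) = (1/(n(n-1))) Σ_i (λ_i² - (2i-1)λ_i)` satisfies
`r(λ) ≤ (λ_2 - 3 + λ_1(λ_1 - λ_2 + 2)/n)/(n-1)`. -/
theorem normalized_character_upper_bound (n : ℕ) (hn : 2 ≤ n) (f : ℕ → ℕ)
    (hf : Antitone f) (hsum : ∑ i ∈ Finset.range n, f i = n)
    (hvanish : ∀ i, n ≤ i → f i = 0) :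
    (1 / ((n : ℝ) * ((n : ℝ) - 1))) *
        ∑ i ∈ Finset.range n, (((f i : ℝ)) ^ 2 - (2 * (i : ℝ) + 1) * (f i : ℝ)) ≤
      ((f 1 : ℝ) - 3 + (f 0 : ℝ) * ((f 0 : ℝ) - (f 1 : ℝ) + 2) / (n : ℝ)) / ((n : ℝ) - 1) := by
  obtain ⟨m, rfl⟩ : ∃ m, n = m + 2 := ⟨n - 2, by omega⟩
  have hsum' : ∑ i ∈ Finset.range (m + 1), f (i + 1) + f 0 = m + 2 := by
    rw [← Finset.sum_range_succ']; exact hsum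
  -- tail sum in ℝ
  have htail : ∑ i ∈ Finset.range (m + 1), (f (i + 1) : ℝ) = (m : ℝ) + 2 - (f 0 : ℝ) := by
    have h := congrArg (Nat.cast : ℕ → ℝ) hsum'
    push_cast at h
    linarith
  have key : ∑ i ∈ Finset.range (m + 2), (((f i : ℝ)) ^ 2 - (2 * (i : ℝ) + 1) * (f i : ℝ)) ≤
      ((m : ℝ) + 2) * ((f 1 : ℝ) - 3) + (f 0 : ℝ) * ((f 0 : ℝ) - (f 1 : ℝ) + 2) := by
    rw [Finset.sum_range_succ']
    have hterm : ∀ i ∈ Finset.range (m + 1),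
        ((f (i + 1) : ℝ)) ^ 2 - (2 * ((i + 1 : ℕ) : ℝ) + 1) * (f (i + 1) : ℝ) ≤
          ((f 1 : ℝ) - 3) * (f (i + 1) : ℝ) := by
      intro i _
      have hle : f (i + 1) ≤ f 1 := hf (by omega)
      have hleR : (f (i + 1) : ℝ) ≤ (f 1 : ℝ) := by exact_mod_cast hle
      have hnn : (0 : ℝ) ≤ (f (i + 1) : ℝ) := by positivity
      have hi : (0 : ℝ) ≤ (i : ℝ) := by positivity
      push_cast
      nlinarith [mul_le_mul_of_nonneg_right hleR hnn, mul_nonneg hi hnn]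
    have h1 : ∑ i ∈ Finset.range (m + 1),
        (((f (i + 1) : ℝ)) ^ 2 - (2 * ((i + 1 : ℕ) : ℝ) + 1) * (f (i + 1) : ℝ)) ≤
        ∑ i ∈ Finset.range (m + 1), ((f 1 : ℝ) - 3) * (f (i + 1) : ℝ) :=
      Finset.sum_le_sum hterm
    rw [← Finset.mul_sum, htail] at h1
    have h0 : ((f 0 : ℝ)) ^ 2 - (2 * ((0 : ℕ) : ℝ) + 1) * (f 0 : ℝ) =
        (f 0 : ℝ) ^ 2 - (f 0 : ℝ) := by push_cast; ring
    nlinarith [h1]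
  have hN : (0 : ℝ) < (m : ℝ) + 2 := by positivity
  have hN1 : (0 : ℝ) < (m : ℝ) + 1 := by positivity
  push_cast
  have expand : ((f 1 : ℝ) - 3 + (f 0 : ℝ) * ((f 0 : ℝ) - (f 1 : ℝ) + 2) / ((m : ℝ) + 2)) /
      ((m : ℝ) + 2 - 1) =
      (1 / (((m : ℝ) + 2) * ((m : ℝ) + 2 - 1))) *
        (((m : ℝ) + 2) * ((f 1 : ℝ) - 3) + (f 0 : ℝ) * ((f 0 : ℝ) - (f 1 : ℝ) + 2)) := by
    have h21 : (m : ℝ) + 2 - 1 = (m : ℝ) + 1 := by ring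
    rw [h21]
    field_simp
  rw [expand]
  apply mul_le_mul_of_nonneg_left _ (by rw [show (m:ℝ)+2-1 = (m:ℝ)+1 from by ring]; positivity)
  exact key
end

section
/- Let λ and ξ be partitions of the same integer n ≥ 2 with λ ⊵ ξ in the dominance order. Then r(λ) ≥ r(ξ). -/
open Finset

/-
By Abel summation, `Σ dᵢ bᵢ` is a nonnegative combination of the partial sums `Dⱼ` of `d`
weighted by the drops `bⱼ₋₁ - bⱼ` of `b`, once the boundary term `D_n b_{n-1}` vanishes.
With `d = λ - ξ` and `b_i = λ_i + ξ_i - (2i+1)`, the products `dᵢ bᵢ` are exactly the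
differences of the summands of `r(λ)` and `r(ξ)`; dominance makes every `Dⱼ` nonnegative and
`b` is antitone because `λ` and `ξ` are.
-/

theorem Finset.sum_range_mul_nonneg_of_partialSums_nonneg {R : Type*} [CommRing R]
    [PartialOrder R] [IsOrderedRing R] {d b : ℕ → R} {n : ℕ} (hb : Antitone b)
    (hd : ∀ j ≤ n, 0 ≤ ∑ i ∈ range j, d i) (htotal : ∑ i ∈ range n, d i = 0) :
    0 ≤ ∑ i ∈ range n, d i * b i := by
  simp_rw [mul_comm (d _), ← smul_eq_mul]
  rw [sum_range_by_parts, htotal, smul_zero, zero_sub, neg_nonneg]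
  refine sum_nonpos fun i hi => ?_
  have hi : i + 1 ≤ n := by grind
  exact smul_nonpos_of_nonpos_of_nonneg (sub_nonpos.2 (hb i.le_succ)) (hd _ hi)

lemma one_div_natCast_mul_natCast_sub_one_nonneg (n : ℕ) :
    0 ≤ 1 / ((n : ℝ) * ((n : ℝ) - 1)) := by
  rcases n with _ | n
  · simp
  · rw [Nat.cast_succ, add_sub_cancel_right]
    positivity

theorem normalized_character_monotone_dominance_general (n : ℕ) (f g : ℕ → ℕ)
    (hf : Antitone f) (hfsum : ∑ i ∈ Finset.range n, f i = n)
    (hg : Antitone g) (hgsum : ∑ i ∈ Finset.range n, g i = n)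
    (hdom : ∀ j : ℕ, ∑ i ∈ Finset.range j, g i ≤ ∑ i ∈ Finset.range j, f i) :
    (1 / ((n : ℝ) * ((n : ℝ) - 1))) *
        ∑ i ∈ Finset.range n, (((g i : ℝ)) ^ 2 - (2 * (i : ℝ) + 1) * (g i : ℝ)) ≤
      (1 / ((n : ℝ) * ((n : ℝ) - 1))) *
        ∑ i ∈ Finset.range n, (((f i : ℝ)) ^ 2 - (2 * (i : ℝ) + 1) * (f i : ℝ)) := by
  refine mul_le_mul_of_nonneg_left (sub_nonneg.1 ?_)
    (one_div_natCast_mul_natCast_sub_one_nonneg n)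
  have hb : Antitone fun i : ℕ => (f i : ℝ) + g i - (2 * i + 1) := fun i j hij => by
    have : (i : ℝ) ≤ j := by exact_mod_cast hij
    simp only
    linarith [(Nat.cast_le (α := ℝ)).2 (hf hij), (Nat.cast_le (α := ℝ)).2 (hg hij)]
  have hpartial : ∀ j, ∑ i ∈ range j, ((f i : ℝ) - g i) =
      ((∑ i ∈ range j, f i : ℕ) : ℝ) - ((∑ i ∈ range j, g i : ℕ) : ℝ) := by
    intro j
    push_cast
    exact sum_sub_distrib _ _
  have key := sum_range_mul_nonneg_of_partialSums_nonneg hb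
    (fun j _ => by rw [hpartial, sub_nonneg]; exact_mod_cast hdom j)
    (by rw [hpartial, hfsum, hgsum, sub_self])
  rw [← sum_sub_distrib]
  convert key using 2
  ring

/-- Monotonicity of the normalized transposition character in the dominance order: if
`λ ⊵ ξ` are partitions of `n ≥ 2` (given as antitone functions `f, g : ℕ → ℕ` listing the
parts, supported on `{0, …, n-1}`), then `r(λ) ≥ r(ξ)` where
`r(λ) = (1/(n(n-1))) Σ_i (λ_i² - (2i-1)λ_i)`. -/
theorem normalized_character_monotone_dominance (n : ℕ) (hn : 2 ≤ n) (f g : ℕ → ℕ)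
    (hf : Antitone f) (hfsum : ∑ i ∈ Finset.range n, f i = n)
    (hfvanish : ∀ i, n ≤ i → f i = 0)
    (hg : Antitone g) (hgsum : ∑ i ∈ Finset.range n, g i = n)
    (hgvanish : ∀ i, n ≤ i → g i = 0)
    (hdom : ∀ j : ℕ, ∑ i ∈ Finset.range j, g i ≤ ∑ i ∈ Finset.range j, f i) :
    (1 / ((n : ℝ) * ((n : ℝ) - 1))) *
        ∑ i ∈ Finset.range n, (((g i : ℝ)) ^ 2 - (2 * (i : ℝ) + 1) * (g i : ℝ)) ≤
      (1 / ((n : ℝ) * ((n : ℝ) - 1))) *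
        ∑ i ∈ Finset.range n, (((f i : ℝ)) ^ 2 - (2 * (i : ℝ) + 1) * (f i : ℝ)) :=
  normalized_character_monotone_dominance_general n f g hf hfsum hg hgsum hdom
end

section
/- Let n ≥ 2, let λ = (λ_1 ≥ λ_2 ≥ … ) be a partition of n, and let k < l be indices with λ_l < λ_k. Define λ' by λ'_k = λ_k − 1, λ'_l = λ_l + 1, and λ'_i = λ_i for i ∉ {k,l}, and assume λ' is again a partition of n (i.e., λ'_1 ≥ λ'_2 ≥ … ≥ 0). Then r(λ) − r(λ') = 2·(λ_k − λ_l + (l−k) − 1)/(n(n−1)); that is, r(λ) − r(λ') is 2/(n(n−1)) times the number of boxes on the rim between the two positions of the displaced box. -/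
open Finset

/-- Moving a box down-left along the rim: if the partition `λ'` of `n` is obtained from the
partition `λ` of `n` by decreasing part `k` by one and increasing part `l` by one
(`k < l`, `λ_l < λ_k`; partitions are given as antitone functions `f, f' : ℕ → ℕ` listing
the parts, supported on `{0, …, n-1}`), then
`r(λ) - r(λ') = 2(λ_k - λ_l + (l - k) - 1)/(n(n-1))`, i.e. `2/(n(n-1))` times the number
of boxes on the rim between the two positions of the displaced box. -/
theorem normalized_character_box_move (n : ℕ) (hn : 2 ≤ n) (f f' : ℕ → ℕ)
    (hf : Antitone f) (hfsum : ∑ i ∈ Finset.range n, f i = n)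
    (hfvanish : ∀ i, n ≤ i → f i = 0)
    (k l : ℕ) (hkl : k < l) (hparts : f l < f k)
    (hf'def : f' = fun i => if i = k then f k - 1 else if i = l then f l + 1 else f i)
    (hf' : Antitone f') (hf'sum : ∑ i ∈ Finset.range n, f' i = n)
    (hf'vanish : ∀ i, n ≤ i → f' i = 0) :
    (1 / ((n : ℝ) * ((n : ℝ) - 1))) *
        ∑ i ∈ Finset.range n, (((f i : ℝ)) ^ 2 - (2 * (i : ℝ) + 1) * (f i : ℝ)) -
      (1 / ((n : ℝ) * ((n : ℝ) - 1))) *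
        ∑ i ∈ Finset.range n, (((f' i : ℝ)) ^ 2 - (2 * (i : ℝ) + 1) * (f' i : ℝ)) =
      2 * ((f k : ℝ) - (f l : ℝ) + ((l : ℝ) - (k : ℝ)) - 1) / ((n : ℝ) * ((n : ℝ) - 1)) := by
  have hl : l < n := by
    by_contra h
    push_neg at h
    have := hf'vanish l (h)
    rw [hf'def] at this
    simp [Nat.ne_of_gt hkl] at this
  have hk : k < n := hkl.trans hl
  have hkne : k ≠ l := Nat.ne_of_lt hkl
  have hfk1 : 1 ≤ f k := Nat.one_le_iff_ne_zero.mpr (by omega)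
  set D : ℕ → ℝ := fun i =>
    (((f i : ℝ)) ^ 2 - (2 * (i : ℝ) + 1) * (f i : ℝ)) -
    (((f' i : ℝ)) ^ 2 - (2 * (i : ℝ) + 1) * (f' i : ℝ)) with hD
  have hsub : ({k, l} : Finset ℕ) ⊆ Finset.range n := by
    intro x hx
    simp only [Finset.mem_insert, Finset.mem_singleton] at hx
    rcases hx with rfl | rfl <;> simp [hk, hl]
  have hzero : ∀ x ∈ Finset.range n, x ∉ ({k, l} : Finset ℕ) → D x = 0 := by
    intro x _ hx
    simp only [Finset.mem_insert, Finset.mem_singleton, not_or] at hx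
    simp [hD, hf'def, hx.1, hx.2]
  have hsum : ∑ i ∈ Finset.range n, D i = D k + D l := by
    rw [← Finset.sum_subset hsub hzero, Finset.sum_pair hkne]
  have hnn : (n : ℝ) * ((n : ℝ) - 1) ≠ 0 := by
    have : (2 : ℝ) ≤ (n : ℝ) := by exact_mod_cast hn
    have h1 : (n : ℝ) ≠ 0 := by linarith
    have h2 : (n : ℝ) - 1 ≠ 0 := by intro h; linarith
    exact mul_ne_zero h1 h2
  rw [← mul_sub, ← Finset.sum_sub_distrib]
  have : ∑ i ∈ Finset.range n,
      ((((f i : ℝ)) ^ 2 - (2 * (i : ℝ) + 1) * (f i : ℝ)) -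
       (((f' i : ℝ)) ^ 2 - (2 * (i : ℝ) + 1) * (f' i : ℝ))) = D k + D l := hsum
  rw [this]
  have hDk : D k = 2 * (f k : ℝ) - 1 - (2 * (k : ℝ) + 1) := by
    have hc : ((f k - 1 : ℕ) : ℝ) = (f k : ℝ) - 1 := by
      push_cast [Nat.cast_sub hfk1]; ring
    simp only [hD, hf'def, if_pos rfl, hc, if_true]
    ring
  have hDl : D l = -(2 * (f l : ℝ) + 1) + (2 * (l : ℝ) + 1) := by
    simp only [hD, hf'def, if_neg (Ne.symm hkne), if_pos rfl]
    push_cast; ring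
  rw [hDk, hDl]
  field_simp
  ring
end
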